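/- arXiv:2409.04256 — 2 statements merged into one kernel-verified Lean document; each statement's English description precedes it below -/
import Mathlib

section
/- Let f(β) = ‖y − Xβ‖₁ + λ‖Aβ − b‖₁ with y ∈ ℝⁿ, X ∈ ℝ^{n×p}, A ∈ ℝ^{m×p} of full row rank, b ∈ ℝ^m, λ > 0. Let β* be a minimizer of g(β) = ‖y − Xβ‖₁ subject to Aβ = b, and let ω ∈ ℝⁿ be a dual certificate: ‖ω‖_∞ ≤ 1, −ωᵀ(y − Xβ*) = ‖y − Xβ*‖₁, and Xᵀω ⊥ ker A. If λ ≥ ‖(AAᵀ)⁻¹AXᵀω‖_∞, then β* is a global minimizer of the unconstrained f; in particular, f admits a minimizer satisfying Aβ = b. -/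
open Matrix

/-- exact-penalty / zero-thresholding property of the affine
LAD-LASSO: if `λ ≥ ‖(A Aᵀ)⁻¹ A Xᵀ ω‖_∞` for a dual certificate `ω` of the
constrained LAD problem, then the constrained minimizer `β*` globally minimizes the
penalized objective; in particular the latter has a minimizer satisfying `Aβ = b`. -/
theorem stmt13 {n m p : ℕ} (y : Fin n → ℝ) (X : Matrix (Fin n) (Fin p) ℝ)
    (A : Matrix (Fin m) (Fin p) ℝ) (hrank : A.rank = m) (b : Fin m → ℝ)
    (lam : ℝ) (hlam : 0 < lam) (βs : Fin p → ℝ) (hfeas : A.mulVec βs = b)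
    (hmin : ∀ β : Fin p → ℝ, A.mulVec β = b →
      ∑ i, |y i - X.mulVec βs i| ≤ ∑ i, |y i - X.mulVec β i|)
    (ω : Fin n → ℝ) (hω1 : ∀ i, |ω i| ≤ 1)
    (hω2 : -(ω ⬝ᵥ (y - X.mulVec βs)) = ∑ i, |y i - X.mulVec βs i|)
    (hω3 : ∀ k : Fin p → ℝ, A.mulVec k = 0 → Xᵀ.mulVec ω ⬝ᵥ k = 0)
    (hthr : ∀ j, |((A * Aᵀ)⁻¹.mulVec ((A * Xᵀ).mulVec ω)) j| ≤ lam) :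
    (∀ β : Fin p → ℝ,
        (∑ i, |y i - X.mulVec βs i|) + lam * (∑ j, |A.mulVec βs j - b j|) ≤
          (∑ i, |y i - X.mulVec β i|) + lam * ∑ j, |A.mulVec β j - b j|) ∧
    (∃ β : Fin p → ℝ, A.mulVec β = b ∧ ∀ β' : Fin p → ℝ,
        (∑ i, |y i - X.mulVec β i|) + lam * (∑ j, |A.mulVec β j - b j|) ≤
          (∑ i, |y i - X.mulVec β' i|) + lam * ∑ j, |A.mulVec β' j - b j|) := by
  classical
  -- A * Aᵀ is invertible
  have hrk : (A * Aᵀ).rank = m := by rw [Matrix.rank_self_mul_transpose, hrank]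
  have hunit : IsUnit (A * Aᵀ) := by
    rw [← Matrix.mulVec_injective_iff_isUnit]
    have hker : LinearMap.ker (A * Aᵀ).mulVecLin = ⊥ := by
      have h1 := LinearMap.finrank_range_add_finrank_ker (A * Aᵀ).mulVecLin
      rw [Module.finrank_pi] at h1
      have h2 : Module.finrank ℝ (LinearMap.range (A * Aᵀ).mulVecLin) = m := hrk
      have h3 : Module.finrank ℝ (LinearMap.ker (A * Aᵀ).mulVecLin) = 0 := by
        rw [Fintype.card_fin] at h1; omega
      exact Submodule.finrank_eq_zero.mp h3
    have := LinearMap.ker_eq_bot.mp hker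
    intro x y hxy
    exact this (by rw [Matrix.mulVecLin_apply, Matrix.mulVecLin_apply]; exact hxy)
  have hinv : (A * Aᵀ) * (A * Aᵀ)⁻¹ = 1 :=
    Matrix.mul_nonsing_inv _ ((Matrix.isUnit_iff_isUnit_det _).mp hunit)
  set μ : Fin m → ℝ := (A * Aᵀ)⁻¹.mulVec ((A * Xᵀ).mulVec ω) with hμ
  -- Representation: Xᵀ ω = Aᵀ μ
  have hrep : Xᵀ.mulVec ω = Aᵀ.mulVec μ := by
    set v : Fin p → ℝ := Xᵀ.mulVec ω - Aᵀ.mulVec μ with hv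
    have hAv : A.mulVec v = 0 := by
      have h1 : A.mulVec (Xᵀ.mulVec ω) = (A * Xᵀ).mulVec ω := Matrix.mulVec_mulVec _ _ _
      have h2 : A.mulVec (Aᵀ.mulVec μ) = (A * Xᵀ).mulVec ω := by
        rw [hμ, Matrix.mulVec_mulVec, Matrix.mulVec_mulVec, hinv, Matrix.one_mulVec]
      rw [hv, Matrix.mulVec_sub, h1, h2, sub_self]
    have h1 : Xᵀ.mulVec ω ⬝ᵥ v = 0 := hω3 v hAv
    have h2 : Aᵀ.mulVec μ ⬝ᵥ v = 0 := by
      rw [Matrix.mulVec_transpose, ← Matrix.dotProduct_mulVec, hAv, dotProduct_zero]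
    have h3 : v ⬝ᵥ v = 0 := by
      rw [hv, sub_dotProduct, h1, h2, sub_self]
    have h4 : v = 0 := dotProduct_self_eq_zero.mp h3
    have := sub_eq_zero.mp (hv ▸ h4)
    exact this
  -- the key inequality
  have key : ∀ β : Fin p → ℝ, (∑ i, |y i - X.mulVec βs i|) ≤
      (∑ i, |y i - X.mulVec β i|) + lam * ∑ j, |A.mulVec β j - b j| := by
    intro β
    have e1 : ω ⬝ᵥ (X.mulVec β - X.mulVec βs) = μ ⬝ᵥ (A.mulVec β - b) := by
      rw [← Matrix.mulVec_sub, Matrix.dotProduct_mulVec, ← Matrix.mulVec_transpose, hrep,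
        Matrix.mulVec_transpose, ← Matrix.dotProduct_mulVec, Matrix.mulVec_sub, hfeas]
    have e2 : -(ω ⬝ᵥ (y - X.mulVec βs)) =
        -(ω ⬝ᵥ (y - X.mulVec β)) + -(μ ⬝ᵥ (A.mulVec β - b)) := by
      rw [← e1]
      have : y - X.mulVec βs = (y - X.mulVec β) + (X.mulVec β - X.mulVec βs) := by ring_nf
      rw [this, dotProduct_add]; ring
    have h3 : -(ω ⬝ᵥ (y - X.mulVec β)) ≤ ∑ i, |y i - X.mulVec β i| := by
      rw [dotProduct, ← Finset.sum_neg_distrib]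
      refine Finset.sum_le_sum fun i _ => ?_
      have : |ω i * (y - X.mulVec β) i| ≤ |(y - X.mulVec β) i| := by
        rw [abs_mul]
        calc |ω i| * |(y - X.mulVec β) i| ≤ 1 * |(y - X.mulVec β) i| :=
              mul_le_mul_of_nonneg_right (hω1 i) (abs_nonneg _)
          _ = |(y - X.mulVec β) i| := one_mul _
      have h := (neg_le_abs (ω i * (y - X.mulVec β) i)).trans this
      simpa using h
    have h4 : -(μ ⬝ᵥ (A.mulVec β - b)) ≤ lam * ∑ j, |A.mulVec β j - b j| := by
      rw [dotProduct, ← Finset.sum_neg_distrib, Finset.mul_sum]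
      refine Finset.sum_le_sum fun j _ => ?_
      have habs : |μ j * (A.mulVec β - b) j| ≤ lam * |(A.mulVec β - b) j| := by
        rw [abs_mul]
        exact mul_le_mul_of_nonneg_right (hthr j) (abs_nonneg _)
      have h := (neg_le_abs (μ j * (A.mulVec β - b) j)).trans habs
      simpa using h
    calc ∑ i, |y i - X.mulVec βs i| = -(ω ⬝ᵥ (y - X.mulVec βs)) := hω2.symm
      _ = -(ω ⬝ᵥ (y - X.mulVec β)) + -(μ ⬝ᵥ (A.mulVec β - b)) := e2
      _ ≤ (∑ i, |y i - X.mulVec β i|) + lam * ∑ j, |A.mulVec β j - b j| := add_le_add h3 h4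
  have main : ∀ β : Fin p → ℝ,
      (∑ i, |y i - X.mulVec βs i|) + lam * (∑ j, |A.mulVec βs j - b j|) ≤
        (∑ i, |y i - X.mulVec β i|) + lam * ∑ j, |A.mulVec β j - b j| := by
    intro β
    have hz : (∑ j, |A.mulVec βs j - b j|) = 0 := by
      simp [hfeas]
    rw [hz, mul_zero, add_zero]
    exact key β
  exact ⟨main, βs, hfeas, main⟩
end

section
/- Let u ∈ ℝⁿ, v ∈ ℝⁿ be two samples, and consider the stacked model y = Xβ + ε with yᵀ = (uᵀ, vᵀ) ∈ ℝ^{2n}, X the 2n×2 matrix whose first column is the all-ones vector of length 2n and whose second column is (0ₙ, 1ₙ), A = (0, 1), b = 0. Then the constrained LAD minimizer β̂_{H₀} = (μ̂, 0) with μ̂ any median m_y of the combined sample y, and if no observation equals m_y, the ∞-S statistic s = ‖(AAᵀ)⁻¹AXᵀω‖_∞ with ω = sign(Xβ̂_{H₀} − y) equals |#{i : v_i > m_y} − #{i : v_i < m_y}|. -/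
/-!
Under the constraint `β₁ = 0` the fitted values `Xβ` are the constant `β₀`, so the constrained
LAD problem is the median problem for the combined sample. For `A = (0 1)` one has `AAᵀ = 1`,
and `AXᵀ` sums a vector over the second sample, so the statistic is `|∑ᵢ sign(m_y - vᵢ)|`;
without ties each `vᵢ` contributes `+1` below the median and `-1` above it.
-/

open Matrix

def twoSampleDesign (n : ℕ) : Matrix (Fin n ⊕ Fin n) (Fin 2) ℝ :=
  fun i j => if j = 0 then 1 else Sum.elim (fun _ => 0) (fun _ => 1) i

@[simp] lemma twoSampleDesign_mulVec_inl {n : ℕ} (β : Fin 2 → ℝ) (i : Fin n) :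
    (twoSampleDesign n).mulVec β (Sum.inl i) = β 0 := by
  simp [twoSampleDesign, mulVec, dotProduct]

@[simp] lemma twoSampleDesign_mulVec_inr {n : ℕ} (β : Fin 2 → ℝ) (i : Fin n) :
    (twoSampleDesign n).mulVec β (Sum.inr i) = β 0 + β 1 := by
  simp [twoSampleDesign, mulVec, dotProduct, Fin.sum_univ_two]

lemma twoSampleDesign_mulVec_of_snd_eq_zero {n : ℕ} {β : Fin 2 → ℝ} (hβ : β 1 = 0) :
    (twoSampleDesign n).mulVec β = fun _ => β 0 := by
  funext i; cases i <;> simp [hβ]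

lemma constraint_mul_transpose_twoSampleDesign_mulVec {n : ℕ} (ω : Fin n ⊕ Fin n → ℝ) :
    (!![(0 : ℝ), 1] * (twoSampleDesign n)ᵀ).mulVec ω = fun _ => ∑ i, ω (Sum.inr i) := by
  funext k
  simp [mulVec, Matrix.mul_apply, dotProduct, Fintype.sum_sum_type, twoSampleDesign,
    Fin.sum_univ_two]

lemma sum_sign_sub_eq_card_sub_card {ι : Type*} [Fintype ι] (f : ι → ℝ) {c : ℝ}
    (hf : ∀ i, f i ≠ c) :
    ∑ i, Real.sign (c - f i) =
      ((Finset.univ.filter fun i => f i < c).card : ℝ) -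
        (Finset.univ.filter fun i => f i > c).card := by
  have hsign : ∀ i, Real.sign (c - f i) = if f i < c then 1 else -1 := fun i => by
    rcases (hf i).lt_or_gt with h | h
    · rw [if_pos h, Real.sign_of_pos (sub_pos.2 h)]
    · rw [if_neg h.not_gt, Real.sign_of_neg (sub_neg.2 h)]
  have hcompl : (Finset.univ.filter fun i => ¬ f i < c) = Finset.univ.filter fun i => f i > c :=
    Finset.filter_congr fun i _ => by
      simpa only [not_lt] using (hf i).symm.le_iff_lt
  rw [Finset.sum_congr rfl fun i _ => hsign i, Finset.sum_ite, Finset.sum_const, Finset.sum_const,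
    hcompl]
  simp only [nsmul_eq_mul, mul_one, mul_neg_one, sub_eq_add_neg]

/-- the unpaired ∞-S test. With stacked data `y = (u, v)`, design
`X = [1, (0,1)]`, `A = (0 1)`, `b = 0`: the constrained LAD minimizer is
`(m_y, 0)` for `m_y` a median of the combined sample, and, when no observation
equals `m_y`, the statistic `‖(A Aᵀ)⁻¹ A Xᵀ ω‖_∞` with `ω = sign(X β̂ - y)` equals
`|#{i : v_i > m_y} - #{i : v_i < m_y}|` (the median test). -/
theorem stmt17 {n : ℕ} (u v : Fin n → ℝ) (my : ℝ)
    (hmed : ∀ t : ℝ, ∑ i, |Sum.elim u v i - my| ≤ ∑ i, |Sum.elim u v i - t|)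
    (hties : ∀ i, u i ≠ my ∧ v i ≠ my) :
    (let y : Fin n ⊕ Fin n → ℝ := Sum.elim u v
     let X : Matrix (Fin n ⊕ Fin n) (Fin 2) ℝ :=
       fun i j => if j = 0 then 1 else Sum.elim (fun _ => 0) (fun _ => 1) i
     (∀ β : Fin 2 → ℝ, β 1 = 0 →
        ∑ i, |y i - X.mulVec ![my, 0] i| ≤ ∑ i, |y i - X.mulVec β i|) ∧
     (let A : Matrix (Fin 1) (Fin 2) ℝ := !![0, 1]
      let ω : Fin n ⊕ Fin n → ℝ := fun i => Real.sign (X.mulVec ![my, 0] i - y i)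
      (⨆ k, |((A * Aᵀ)⁻¹.mulVec ((A * Xᵀ).mulVec ω)) k|) =
        |((Finset.univ.filter fun i => v i > my).card : ℝ) -
          ((Finset.univ.filter fun i => v i < my).card : ℝ)|)) := by
  intro y X
  have hX : X = twoSampleDesign n := rfl
  have hfit : (twoSampleDesign n).mulVec ![my, 0] = fun _ => my :=
    twoSampleDesign_mulVec_of_snd_eq_zero rfl
  refine ⟨fun β hβ => ?_, ?_⟩
  · rw [hX, hfit, twoSampleDesign_mulVec_of_snd_eq_zero hβ]
    simpa only [abs_sub_comm] using hmed (β 0)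
  · have hAAt : !![(0 : ℝ), 1] * !![(0 : ℝ), 1]ᵀ = 1 := by
      ext i j; fin_cases i; fin_cases j; simp [Matrix.mul_apply]
    simp only [hAAt, inv_one, one_mulVec, hX, constraint_mul_transpose_twoSampleDesign_mulVec, hfit,
      y, Sum.elim_inr, ciSup_const]
    rw [sum_sign_sub_eq_card_sub_card v fun i => (hties i).2, abs_sub_comm]
end
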